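/- arXiv:1509.03792 — 3 statements merged into one kernel-verified Lean document; each statement's English description precedes it below -/
import Mathlib

section
/- Let r ≥ 1 be an integer and let h : [0,∞) → ℝ be such that h, h', …, h^{(r−1)} are absolutely continuous and the right derivative h^{(r)}_+ of order r exists everywhere. Then for every integer L ≥ 1 and every integer k ≥ 0, (Δ^r g)(k) = (−1)^r L^{−r} ∫_{[0,1]^r} h^{(r)}_+((k + u_1 + ⋯ + u_r)/L) du_1 ⋯ du_r, where g(x) = h(x/L). -/
open MeasureTheory Metric Set
open scoped ENNReal NNReal

noncomputable section

attribute [local instance] Classical.propDecidable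

/-- Euclidean space `ℝ^{d+1}`. -/
abbrev ESp (d : ℕ) : Type := EuclideanSpace ℝ (Fin (d + 1))

/-- The unit sphere `S^d ⊆ ℝ^{d+1}`. -/
abbrev Sph (d : ℕ) : Type := ↥(Metric.sphere (0 : ESp d) 1)

/-- The rotation-invariant probability measure `σ` on the sphere `S^d`
(obtained by normalizing the surface measure induced by Lebesgue measure). -/
def sphMeasure (d : ℕ) : Measure (Sph d) :=
  (((volume : Measure (ESp d)).toSphere) Set.univ)⁻¹ • (volume : Measure (ESp d)).toSphere

/-- `Π_L^d` : restrictions to the sphere of real polynomials on `ℝ^{d+1}` of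
total degree at most `L`. -/
def PiPoly (d L : ℕ) : Set (Sph d → ℝ) :=
  {f | ∃ P : MvPolynomial (Fin (d + 1)) ℝ, P.totalDegree ≤ L ∧
    ∀ x : Sph d, f x = MvPolynomial.eval (fun i => (x : ESp d) i) P}

/-- `H_ℓ^d` : spherical harmonics of degree `ℓ`, i.e. the orthogonal complement of
`Π_{ℓ-1}^d` in `Π_ℓ^d` with respect to the `L_2(σ)` inner product
(`H_0^d` being the constants). -/
def Harm (d ℓ : ℕ) : Set (Sph d → ℝ) :=
  if ℓ = 0 then PiPoly d 0
  else {f | f ∈ PiPoly d ℓ ∧ ∀ Q ∈ PiPoly d (ℓ - 1), ∫ x, f x * Q x ∂(sphMeasure d) = 0}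

/-- `g` is the orthogonal projection `H_ℓ(f)` of `f` onto `H_ℓ^d` :
`g ∈ H_ℓ^d` and `⟨f, Y⟩ = ⟨g, Y⟩` for all `Y ∈ H_ℓ^d`. -/
def IsFourierProj (d : ℕ) (f : Sph d → ℝ) (ℓ : ℕ) (g : Sph d → ℝ) : Prop :=
  g ∈ Harm d ℓ ∧ ∀ Y ∈ Harm d ℓ,
    ∫ x, f x * Y x ∂(sphMeasure d) = ∫ x, g x * Y x ∂(sphMeasure d)

/-- The projection `H_ℓ(f)` (chosen canonically; it is unique when it exists). -/
def fourierProj (d : ℕ) (f : Sph d → ℝ) (ℓ : ℕ) : Sph d → ℝ :=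
  if h : ∃ g, IsFourierProj d f ℓ g then h.choose else 0

/-- A filter: a continuous function on `[0,∞)` with `h ≡ 1` on `[0,1]` and `h ≡ 0` on `[2,∞)`. -/
def IsFilter (h : ℝ → ℝ) : Prop :=
  ContinuousOn h (Set.Ici 0) ∧ (∀ t ∈ Set.Icc (0:ℝ) 1, h t = 1) ∧ ∀ t : ℝ, 2 ≤ t → h t = 0

/-- The filtered approximation operator `V_L^h(f) = Σ_{ℓ≥0} h(ℓ/L) H_ℓ(f)`;
the sum is finite since `h(ℓ/L) = 0` for `ℓ ≥ 2L`. -/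
def VL (d : ℕ) (h : ℝ → ℝ) (L : ℕ) (f : Sph d → ℝ) : Sph d → ℝ :=
  fun x => ∑ ℓ ∈ Finset.range (2 * L), h ((ℓ : ℝ) / (L : ℝ)) * fourierProj d f ℓ x

/-- Absolute continuity of `f` on a set `s ⊆ ℝ` (ε-δ definition with finitely many
non-overlapping intervals with endpoints in `s`). -/
def AbsContOn (f : ℝ → ℝ) (s : Set ℝ) : Prop :=
  ∀ ε > (0:ℝ), ∃ δ > (0:ℝ), ∀ n : ℕ, ∀ u v : Fin n → ℝ,
    (∀ i, u i ∈ s ∧ v i ∈ s ∧ u i ≤ v i) →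
    (∀ i j, i ≠ j → Disjoint (Set.Ioo (u i) (v i)) (Set.Ioo (u j) (v j))) →
    (∑ i, (v i - u i)) < δ → (∑ i, |f (v i) - f (u i)|) < ε

/-- `h ∈ W^rBV` on the set `s` : for `r = 0` this means `h` is of bounded variation on `s`;
for `r ≥ 1` it means `h, h', …, h^{(r-1)}` exist and are absolutely continuous on `s`, and the
one-sided derivatives `h^{(r)}_+`, `h^{(r)}_-` of order `r` exist everywhere on `s` and are of
bounded variation on `s`. -/
def MemWrBVOn (r : ℕ) (h : ℝ → ℝ) (s : Set ℝ) : Prop :=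
  if r = 0 then BoundedVariationOn h s
  else
    ∃ (D : ℕ → ℝ → ℝ) (Dp Dm : ℝ → ℝ),
      D 0 = h ∧
      (∀ k, k + 1 < r → ∀ t ∈ s, HasDerivWithinAt (D k) (D (k + 1) t) s t) ∧
      (∀ k, k < r → AbsContOn (D k) s) ∧
      (∀ t ∈ s, HasDerivWithinAt (D (r - 1)) (Dp t) (s ∩ Set.Ici t) t) ∧
      (∀ t ∈ s, HasDerivWithinAt (D (r - 1)) (Dm t) (s ∩ Set.Iic t) t) ∧
      BoundedVariationOn Dp s ∧ BoundedVariationOn Dm s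

/-- `h ∈ W^rBV` on `[0,∞)`. -/
def MemWrBV (r : ℕ) (h : ℝ → ℝ) : Prop := MemWrBVOn r h (Set.Ici 0)

/-- `g = f^{(s)}` is the `s`-th order (Laplace–Beltrami) derivative of `f`:
`H_0(g) = 0` and `H_ℓ(g) = (ℓ(ℓ+d-1))^{s/2} H_ℓ(f)` for `ℓ ≥ 1`. -/
def IsSobolevDeriv (d : ℕ) (s : ℝ) (f g : Sph d → ℝ) : Prop :=
  IsFourierProj d g 0 (fun _ => 0) ∧
  ∀ ℓ : ℕ, 1 ≤ ℓ → ∀ u : Sph d → ℝ, IsFourierProj d f ℓ u →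
    IsFourierProj d g ℓ (fun x => ((ℓ : ℝ) * ((ℓ : ℝ) + (d : ℝ) - 1)) ^ (s / 2) * u x)

/-- `K` is the reproducing kernel `K_ℓ` of `H_ℓ^d` in `L_2(σ)`. -/
def IsReproKernel (d ℓ : ℕ) (K : Sph d → Sph d → ℝ) : Prop :=
  (∀ y, (fun x => K x y) ∈ Harm d ℓ) ∧
  (∀ f ∈ Harm d ℓ, ∀ x, ∫ y, f y * K x y ∂(sphMeasure d) = f x)

/-- The reproducing kernel `K_ℓ(x,y) = Σ_k Y_{ℓ,k}(x) Y_{ℓ,k}(y)` of `H_ℓ^d`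
(chosen canonically; it is unique). -/
def reproKernel (d ℓ : ℕ) : Sph d → Sph d → ℝ :=
  if h : ∃ K, IsReproKernel d ℓ K then h.choose else fun _ _ => 0

/-- The filtered kernel `Φ_L^h(x,y) = Σ_{ℓ≥0} h(ℓ/L) K_ℓ(x,y)` (a finite sum). -/
def PhiL (d : ℕ) (h : ℝ → ℝ) (L : ℕ) (x y : Sph d) : ℝ :=
  ∑ ℓ ∈ Finset.range (2 * L), h ((ℓ : ℝ) / (L : ℝ)) * reproKernel d ℓ x y

/-- A positive cubature rule with nodes `y`, weights `W`, exact on `Π_M^d`. -/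
def IsPosCubature (d M N : ℕ) (y : Fin N → Sph d) (W : Fin N → ℝ) : Prop :=
  (∀ i, 0 < W i) ∧
  ∀ P ∈ PiPoly d M, ∑ i, W i * P (y i) = ∫ x, P x ∂(sphMeasure d)

/-- The filtered hyperinterpolation operator
`V_{L,N}(f)(x) = Σ_i W_i f(y_i) Φ_L^h(y_i, x)`. -/
def VLN (d : ℕ) (h : ℝ → ℝ) (L N : ℕ) (y : Fin N → Sph d) (W : Fin N → ℝ)
    (f : Sph d → ℝ) : Sph d → ℝ :=
  fun x => ∑ i, W i * f (y i) * PhiL d h L (y i) x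

/-- Forward difference operator `Δg(x) = g(x) - g(x+1)` on functions on `ℝ`. -/
def fdiff (g : ℝ → ℝ) : ℝ → ℝ := fun x => g x - g (x + 1)

/-- Forward difference operator `Δg(k) = g(k) - g(k+1)` on sequences. -/
def fdiffSeq (g : ℕ → ℝ) : ℕ → ℝ := fun k => g k - g (k + 1)

/-!
Put `ψ_j(t) = L^{-j} h^{(j)}(t / L)` (with `h^{(r)} = h^{(r)}_+`) and
`G_j(x) = ∫_{[0,1]^j} ψ_j(x + u_1 + ⋯ + u_j) du`, so that `G_0 = g`. An absolutely continuous
function is the integral of its derivative, and a right derivative that exists everywhere agrees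
with the derivative almost everywhere, so `ψ_j(y) - ψ_j(y + 1) = -∫_0^1 ψ_{j+1}(y + t) dt`.
Integrating over `[0,1]^j` and applying Fubini gives `Δ G_j = -G_{j+1}`, and the claim follows by
induction on `j`. The only function that may be discontinuous is `h^{(r)}_+`; its composition with
`u ↦ x + ∑ u_i` is integrable on the cube because the sum of `n ≥ 1` independent uniform variables
has density at most `1`.
-/

def IsPrimitiveOnNonneg (F f : ℝ → ℝ) : Prop :=
  ∀ a b, 0 ≤ a → a ≤ b → IntegrableOn f (Icc a b) ∧ ∫ t in a..b, f t = F b - F a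

theorem AbsContOn.absolutelyContinuousOnInterval {f : ℝ → ℝ} {s : Set ℝ} (hf : AbsContOn f s)
    {a b : ℝ} (hab : uIcc a b ⊆ s) : AbsolutelyContinuousOnInterval f a b := by
  rw [absolutelyContinuousOnInterval_iff]
  intro ε hε
  obtain ⟨δ, hδ, H⟩ := hf ε hε
  refine ⟨δ, hδ, fun ⟨n, I⟩ ⟨hmem, hdisj⟩ hlen => ?_⟩
  have hdist : ∀ x y : ℝ, dist x y = max x y - min x y := fun x y => by
    rw [max_sub_min_eq_abs, Real.dist_eq, abs_sub_comm]
  have hfdist : ∀ x y : ℝ, dist (f x) (f y) = |f (max x y) - f (min x y)| := fun x y => by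
    rcases le_total x y with h | h <;> simp [h, Real.dist_eq, abs_sub_comm]
  simp only [hdist, ← Fin.sum_univ_eq_sum_range] at hlen
  simp only [hfdist, ← Fin.sum_univ_eq_sum_range]
  refine H n (fun i => min (I i).1 (I i).2) (fun i => max (I i).1 (I i).2) (fun i => ?_)
    (fun i j hij => ?_) hlen
  · obtain ⟨h1, h2⟩ := hmem i (Finset.mem_range.2 i.2)
    exact ⟨hab (min_rec' (· ∈ uIcc a b) h1 h2), hab (max_rec' (· ∈ uIcc a b) h1 h2), min_le_max⟩
  · exact (hdisj (Finset.mem_coe.2 (Finset.mem_range.2 i.2)) (Finset.mem_coe.2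
      (Finset.mem_range.2 j.2)) (Fin.val_injective.ne hij)).mono Ioo_subset_Ioc_self
      Ioo_subset_Ioc_self

theorem AbsContOn.continuousOn_Ici {f : ℝ → ℝ} {a : ℝ} (hf : AbsContOn f (Ici a)) :
    ContinuousOn f (Ici a) := by
  intro t ht
  have hsub : uIcc a (t + 1) ⊆ Ici a := by
    rw [uIcc_of_le (by linarith [mem_Ici.1 ht])]
    exact Icc_subset_Ici_self
  have hcont := (hf.absolutelyContinuousOnInterval hsub).continuousOn t
  rw [uIcc_of_le (by linarith [mem_Ici.1 ht]), ← Ici_inter_Iic] at hcont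
  exact (hcont ⟨ht, by simp⟩).mono_of_mem_nhdsWithin
    (inter_mem_nhdsWithin _ (Iic_mem_nhds (by linarith)))

theorem AbsolutelyContinuousOnInterval.deriv_ae_eq_of_hasDerivWithinAt_Ici {f f' : ℝ → ℝ}
    {a b : ℝ} (hf : AbsolutelyContinuousOnInterval f a b) (hab : a ≤ b)
    (hf' : ∀ x ∈ Ioo a b, HasDerivWithinAt f (f' x) (Ici x) x) :
    deriv f =ᵐ[volume.restrict (uIoc a b)] f' := by
  rw [Filter.EventuallyEq, ae_restrict_iff' measurableSet_uIoc, uIoc_of_le hab]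
  filter_upwards [hf.ae_differentiableAt, volume.ae_ne b] with x hdiff hxb hx
  have hdiff := hdiff (uIcc_of_le hab ▸ Ioc_subset_Icc_self hx)
  exact (uniqueDiffWithinAt_Ici x).eq_deriv _ hdiff.hasDerivAt.hasDerivWithinAt
    (hf' x ⟨hx.1, hx.2.lt_of_ne hxb⟩)

theorem AbsContOn.isPrimitiveOnNonneg {f f' : ℝ → ℝ} (hf : AbsContOn f (Ici 0))
    (hf' : ∀ t ∈ Ici (0 : ℝ), HasDerivWithinAt f (f' t) (Ici t) t) :
    IsPrimitiveOnNonneg f f' := by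
  intro a b ha hab
  have hsub : uIcc a b ⊆ Ici 0 := by
    rw [uIcc_of_le hab]
    exact fun t ht => ha.trans ht.1
  have hac := hf.absolutelyContinuousOnInterval hsub
  have hae := hac.deriv_ae_eq_of_hasDerivWithinAt_Ici hab fun x hx => hf' x (ha.trans hx.1.le)
  refine ⟨(intervalIntegrable_iff_integrableOn_Icc_of_le hab).1
    (hac.intervalIntegrable_deriv.congr_ae hae), ?_⟩
  rw [← intervalIntegral.integral_congr_ae_restrict hae, hac.integral_deriv_eq_sub]

theorem IsPrimitiveOnNonneg.const_mul {F f : ℝ → ℝ} (h : IsPrimitiveOnNonneg F f) (m : ℝ) :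
    IsPrimitiveOnNonneg (fun t => m * F t) (fun t => m * f t) := fun a b ha hab =>
  ⟨(h a b ha hab).1.const_mul m,
    by rw [intervalIntegral.integral_const_mul, (h a b ha hab).2, mul_sub]⟩

theorem IsPrimitiveOnNonneg.comp_div {F f : ℝ → ℝ} (h : IsPrimitiveOnNonneg F f) {c : ℝ}
    (hc : 0 < c) : IsPrimitiveOnNonneg (fun t => F (t / c)) (fun t => c⁻¹ * f (t / c)) := by
  intro a b ha hab
  have hab' : a / c ≤ b / c := div_le_div_of_nonneg_right hab hc.le
  obtain ⟨hint, hftc⟩ := h (a / c) (b / c) (div_nonneg ha hc.le) hab'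
  refine ⟨?_, ?_⟩
  · have := ((intervalIntegrable_iff_integrableOn_Icc_of_le hab').2 hint).comp_mul_left (c := c⁻¹)
    simp only [div_inv_eq_mul, div_mul_cancel₀ _ hc.ne', inv_mul_eq_div] at this
    exact ((intervalIntegrable_iff_integrableOn_Icc_of_le hab).1 this).const_mul c⁻¹
  · rw [intervalIntegral.integral_const_mul, intervalIntegral.integral_comp_div _ hc.ne', hftc,
      smul_eq_mul, inv_mul_cancel_left₀ hc.ne']

def unitCube (n : ℕ) : Set (Fin n → ℝ) := univ.pi fun _ => Icc 0 1

theorem measurableSet_unitCube (n : ℕ) : MeasurableSet (unitCube n) :=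
  .univ_pi fun _ => measurableSet_Icc

theorem sum_mem_Icc_of_mem_unitCube {n : ℕ} {u : Fin n → ℝ} (hu : u ∈ unitCube n) :
    ∑ i, u i ∈ Icc (0 : ℝ) n := by
  have hu' : ∀ i, u i ∈ Icc (0 : ℝ) 1 := fun i => hu i (mem_univ i)
  refine ⟨Finset.sum_nonneg fun i _ => (hu' i).1, ?_⟩
  simpa using Finset.sum_le_sum fun i (_ : i ∈ Finset.univ) => (hu' i).2

theorem volume_unitCube (n : ℕ) : volume (unitCube n) = 1 := by
  simp only [unitCube, volume_pi_pi, Real.volume_Icc, sub_zero, ENNReal.ofReal_one,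
    Finset.prod_const_one]

theorem measurePreserving_piFinSuccAbove_unitCube (n : ℕ) :
    MeasurePreserving (MeasurableEquiv.piFinSuccAbove (fun _ => ℝ) 0)
      (volume.restrict (unitCube (n + 1)))
      ((volume.restrict (Icc (0 : ℝ) 1)).prod (volume.restrict (unitCube n))) := by
  have h := (volume_preserving_piFinSuccAbove (fun _ : Fin (n + 1) => ℝ) 0).restrict_preimage_emb
    (MeasurableEquiv.measurableEmbedding _) (Icc 0 1 ×ˢ unitCube n)
  have hpre : MeasurableEquiv.piFinSuccAbove (fun _ => ℝ) 0 ⁻¹' (Icc 0 1 ×ˢ unitCube n) =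
      unitCube (n + 1) := by
    ext u
    simp [unitCube, Fin.forall_fin_succ, Fin.tail, -pi_univ_Icc]
  rwa [hpre, Measure.volume_eq_prod, ← Measure.prod_restrict] at h

theorem sum_piFinSuccAbove_zero {n : ℕ} (u : Fin (n + 1) → ℝ) :
    ∑ i, (MeasurableEquiv.piFinSuccAbove (fun _ => ℝ) 0 u).2 i +
      (MeasurableEquiv.piFinSuccAbove (fun _ => ℝ) 0 u).1 = ∑ i, u i := by
  simp [Fin.sum_univ_succ, Fin.tail, add_comm]

theorem volume_preimage_add_inter_Icc_zero_one (y : ℝ) (A : Set ℝ) :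
    volume ((y + ·) ⁻¹' A ∩ Icc 0 1) = volume (A ∩ Icc y (y + 1)) := by
  rw [← measure_preimage_add _ y (A ∩ Icc y (y + 1)), preimage_inter, preimage_const_add_Icc,
    sub_self, add_sub_cancel_left]

theorem map_sum_restrict_unitCube_le (x : ℝ) (n : ℕ) :
    (volume.restrict (unitCube (n + 1))).map (fun u => x + ∑ i, u i) ≤
      volume.restrict (Icc x (x + (n + 1))) := by
  set e := MeasurableEquiv.piFinSuccAbove (fun _ : Fin (n + 1) => ℝ) 0
  have hS : Measurable fun v : ℝ × (Fin n → ℝ) => x + ∑ i, v.2 i + v.1 := by fun_prop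
  have hmap : (volume.restrict (unitCube (n + 1))).map (fun u => x + ∑ i, u i) =
      ((volume.restrict (Icc (0 : ℝ) 1)).prod (volume.restrict (unitCube n))).map
        (fun v => x + ∑ i, v.2 i + v.1) := by
    rw [← (measurePreserving_piFinSuccAbove_unitCube n).map_eq, Measure.map_map hS e.measurable]
    congr 1 with u
    simp only [Function.comp_apply, add_assoc, e, sum_piFinSuccAbove_zero]
  rw [hmap, Measure.le_iff]
  intro A hA
  rw [Measure.map_apply hS hA, Measure.prod_apply_symm (hS hA), Measure.restrict_apply hA]
  calc ∫⁻ u in unitCube n, volume.restrict (Icc 0 1) ((x + ∑ i, u i + ·) ⁻¹' A)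
      ≤ ∫⁻ u in unitCube n, volume (A ∩ Icc x (x + (n + 1))) := by
        refine setLIntegral_mono' (measurableSet_unitCube n) fun u hu => ?_
        have hsum := sum_mem_Icc_of_mem_unitCube hu
        rw [Measure.restrict_apply' measurableSet_Icc, volume_preimage_add_inter_Icc_zero_one]
        refine measure_mono (inter_subset_inter_right _ (Icc_subset_Icc ?_ ?_)) <;>
          linarith [hsum.1, hsum.2]
    _ = volume (A ∩ Icc x (x + (n + 1))) := by
        rw [setLIntegral_const, volume_unitCube, mul_one]

theorem integrableOn_unitCube_comp_sum {F : ℝ → ℝ} {x : ℝ} {n : ℕ}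
    (hF : IntegrableOn F (Icc x (x + n))) :
    IntegrableOn (fun u : Fin n → ℝ => F (x + ∑ i, u i)) (unitCube n) := by
  cases n with
  | zero =>
    simpa only [Finset.univ_eq_empty, Finset.sum_empty, add_zero] using
      integrableOn_const (volume_unitCube 0 ▸ ENNReal.one_ne_top)
  | succ n =>
    have hle := map_sum_restrict_unitCube_le x n
    rw [Nat.cast_succ] at hF
    exact (integrable_map_measure (hF.1.mono_measure hle) (by fun_prop)).1
      (Integrable.mono_measure hF hle)

theorem setIntegral_unitCube_succ {G : ℝ → ℝ} {x : ℝ} {n : ℕ}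
    (hG : IntegrableOn (fun u : Fin (n + 1) → ℝ => G (x + ∑ i, u i)) (unitCube (n + 1))) :
    ∫ u in unitCube (n + 1), G (x + ∑ i, u i) =
      ∫ u in unitCube n, ∫ t in (0 : ℝ)..1, G (x + ∑ i, u i + t) := by
  have mp := measurePreserving_piFinSuccAbove_unitCube n
  set g : ℝ × (Fin n → ℝ) → ℝ := fun v => G (x + ∑ i, v.2 i + v.1)
  have hcomp : (fun u : Fin (n + 1) → ℝ => G (x + ∑ i, u i)) =
      g ∘ MeasurableEquiv.piFinSuccAbove (fun _ => ℝ) 0 := by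
    ext u
    simp only [Function.comp_apply, add_assoc, g, sum_piFinSuccAbove_zero]
  rw [hcomp] at hG ⊢
  rw [IntegrableOn, mp.integrable_comp_emb (MeasurableEquiv.measurableEmbedding _)] at hG
  rw [Function.comp_def, mp.integral_comp' g, integral_prod_symm g hG]
  simp_rw [intervalIntegral.integral_of_le zero_le_one, ← integral_Icc_eq_integral_Ioc, g]

theorem fdiff_setIntegral_unitCube {F f : ℝ → ℝ} (hF : ContinuousOn F (Ici 0))
    (hFf : IsPrimitiveOnNonneg F f) (n : ℕ) {x : ℝ} (hx : 0 ≤ x) :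
    fdiff (fun y => ∫ u in unitCube n, F (y + ∑ i, u i)) x =
      -∫ u in unitCube (n + 1), f (x + ∑ i, u i) := by
  have hFint : ∀ y, 0 ≤ y → IntegrableOn (fun u => F (y + ∑ i, u i)) (unitCube n) := fun y hy =>
    integrableOn_unitCube_comp_sum <|
      (hF.mono fun t ht => hy.trans ht.1).integrableOn_Icc
  have hfint : IntegrableOn (fun u => f (x + ∑ i, u i)) (unitCube (n + 1)) :=
    integrableOn_unitCube_comp_sum (hFf _ _ hx (le_add_of_nonneg_right (Nat.cast_nonneg _))).1
  rw [setIntegral_unitCube_succ hfint, ← integral_neg, fdiff,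
    ← integral_sub (hFint x hx) (hFint (x + 1) (by linarith))]
  refine setIntegral_congr_fun (measurableSet_unitCube n) fun u hu => ?_
  have hy : 0 ≤ x + ∑ i, u i := add_nonneg hx (sum_mem_Icc_of_mem_unitCube hu).1
  rw [intervalIntegral.integral_comp_add_left f, add_zero, (hFf _ _ hy (by linarith)).2,
    add_right_comm]
  ring

theorem iterate_fdiff_eq_setIntegral_unitCube {r : ℕ} {ψ : ℕ → ℝ → ℝ}
    (hcont : ∀ j < r, ContinuousOn (ψ j) (Ici 0))
    (hprim : ∀ j < r, IsPrimitiveOnNonneg (ψ j) (ψ (j + 1))) {j : ℕ} (hj : j ≤ r) {x : ℝ}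
    (hx : 0 ≤ x) :
    fdiff^[j] (ψ 0) x = (-1) ^ j * ∫ u in unitCube j, ψ j (x + ∑ i, u i) := by
  induction j generalizing x with
  | zero =>
    simp [Measure.real, volume_unitCube]
  | succ j ih =>
    have step := fdiff_setIntegral_unitCube (hcont j (by omega)) (hprim j (by omega)) j hx
    rw [fdiff] at step
    rw [Function.iterate_succ_apply', fdiff, ih (by omega) hx, ih (by omega) (by linarith)]
    linear_combination (-1) ^ j * step

theorem iterate_fdiff_comp_div_eq_setIntegral_unitCube {r : ℕ} {φ : ℕ → ℝ → ℝ}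
    (hcont : ∀ j < r, ContinuousOn (φ j) (Ici 0))
    (hprim : ∀ j < r, IsPrimitiveOnNonneg (φ j) (φ (j + 1))) {c : ℝ} (hc : 0 < c) {j : ℕ}
    (hj : j ≤ r) {x : ℝ} (hx : 0 ≤ x) :
    fdiff^[j] (fun y => φ 0 (y / c)) x =
      (-1) ^ j * (c ^ j)⁻¹ * ∫ u in unitCube j, φ j ((x + ∑ i, u i) / c) := by
  have key := iterate_fdiff_eq_setIntegral_unitCube (ψ := fun j t => (c ^ j)⁻¹ * φ j (t / c))
    (fun j hj => continuousOn_const.mul <| (hcont j hj).comp (continuousOn_id.div_const _)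
      fun t ht => div_nonneg ht hc.le)
    (fun j hj => by
      convert ((hprim j hj).comp_div hc).const_mul (c ^ j)⁻¹ using 2
      rw [pow_succ, mul_inv, mul_assoc])
    hj hx
  simpa only [pow_zero, inv_one, one_mul, integral_const_mul, mul_assoc] using key

/-- Let `r ≥ 1` and let `h` have absolutely continuous derivatives
`D 0 = h, D 1 = h', …, D (r-1) = h^{(r−1)}` on `[0,∞)`, with the right derivative
`Dp = h^{(r)}_+` of order `r` existing everywhere. Then for `g(x) = h(x/L)`,
`(Δ^r g)(k) = (−1)^r L^{−r} ∫_{[0,1]^r} h^{(r)}_+((k + u_1 + ⋯ + u_r)/L) du`. -/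
theorem statement8 (r : ℕ) (hr : 1 ≤ r) (h : ℝ → ℝ) (D : ℕ → ℝ → ℝ) (Dp : ℝ → ℝ)
    (hD0 : D 0 = h)
    (hDeriv : ∀ k, k + 1 < r → ∀ t ∈ Set.Ici (0:ℝ),
      HasDerivWithinAt (D k) (D (k + 1) t) (Set.Ici 0) t)
    (hAC : ∀ k, k < r → AbsContOn (D k) (Set.Ici 0))
    (hDp : ∀ t ∈ Set.Ici (0:ℝ), HasDerivWithinAt (D (r - 1)) (Dp t) (Set.Ici t) t) :
    ∀ L : ℕ, 1 ≤ L → ∀ k : ℕ,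
      fdiff^[r] (fun x => h (x / (L : ℝ))) (k : ℝ) =
        (-1 : ℝ) ^ r * ((L : ℝ) ^ r)⁻¹ *
          ∫ u in Set.univ.pi (fun _ : Fin r => Set.Icc (0:ℝ) 1),
            Dp (((k : ℝ) + ∑ i, u i) / (L : ℝ)) := by
  intro L hL k
  set φ := Function.update D r Dp
  have hφ : ∀ j < r, φ j = D j := fun j hj => Function.update_of_ne hj.ne _ _
  have hφr : φ r = Dp := Function.update_self _ _ _
  have hprim : ∀ j < r, IsPrimitiveOnNonneg (φ j) (φ (j + 1)) := by
    intro j hj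
    rw [hφ j hj]
    refine (hAC j hj).isPrimitiveOnNonneg fun t ht => ?_
    rcases (Nat.succ_le_of_lt hj).lt_or_eq with hj' | hj'
    · rw [hφ _ hj']
      exact (hDeriv j hj' t ht).mono (Ici_subset_Ici.2 ht)
    · rw [show j + 1 = r from hj', hφr, ← show r - 1 = j by omega]
      exact hDp t ht
  have key := iterate_fdiff_comp_div_eq_setIntegral_unitCube
    (fun j hj => hφ j hj ▸ (hAC j hj).continuousOn_Ici) hprim (Nat.cast_pos.2 hL) le_rfl
    (Nat.cast_nonneg k)
  rwa [hφ 0 hr, hD0, hφr] at key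

end
end

section
/- Let r ≥ 1 be an integer and let h be a filter belonging to W^rBV. Then for every integer L ≥ 1, Σ_{k=0}^{2L} |(Δ^{r+1} g)(k)| ≤ L^{−r} ‖h^{(r)}_+‖_{BV}, where g(x) = h(x/L) and ‖h^{(r)}_+‖_{BV} denotes the total variation of the right derivative h^{(r)}_+ of h of order r on [0,∞). -/
open MeasureTheory Metric Set
open scoped ENNReal NNReal

noncomputable section

attribute [local instance] Classical.propDecidable

/-!
For a function `f` on `[0, ∞)` with right derivative `f'`, the fundamental theorem of calculus
gives `Δ_[δ] f x = ∫₀^δ f' (x + t) dt`, hence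
`Σₖ |Δ_[δ] ^[m+1] f (kδ + s)| ≤ ∫₀^δ Σₖ |Δ_[δ] ^[m] f' (kδ + s + t)| dt`.
Going down the chain `h, h', …, h^{(r-1)}, h^{(r)}_+` this gains a factor `δ` at each of the `r`
steps and ends with `Σₖ |Δ_[δ] h^{(r)}_+ (kδ + s)|`, which is at most the total variation of
`h^{(r)}_+`. Finally `Δ^{r+1}` of `h (· / L)` at `k` is `±Δ_[1/L] ^[r+1] h` at `k / L`.
-/

open scoped fwdDiff

theorem AbsContOn.continuousOn {f : ℝ → ℝ} {s : Set ℝ} (hf : AbsContOn f s) :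
    ContinuousOn f s := by
  refine (Metric.uniformContinuousOn_iff.2 fun ε hε => ?_).continuousOn
  obtain ⟨δ, hδ, H⟩ := hf ε hε
  refine ⟨δ, hδ, fun x hx y hy hxy => ?_⟩
  wlog hle : x ≤ y generalizing x y
  · rw [dist_comm] at hxy ⊢
    exact this y hy x hx hxy (le_of_not_ge hle)
  have := H 1 (fun _ => x) (fun _ => y) (fun _ => ⟨hx, hy, hle⟩)
    (fun i j hij => absurd (Subsingleton.elim i j) hij)
    (by simpa using (le_abs_self (y - x)).trans_lt (by rwa [Real.dist_eq, abs_sub_comm] at hxy))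
  simpa [Real.dist_eq, abs_sub_comm] using this

theorem BoundedVariationOn.intervalIntegrable {φ : ℝ → ℝ} {a b : ℝ}
    (hφ : BoundedVariationOn φ (uIcc a b)) : IntervalIntegrable φ volume a b := by
  obtain ⟨p, q, hp, hq, rfl⟩ := hφ.locallyBoundedVariationOn.exists_monotoneOn_sub_monotoneOn
  exact hp.intervalIntegrable.sub hq.intervalIntegrable

theorem BoundedVariationOn.sum_abs_sub_le {α : Type*} [LinearOrder α] {φ : α → ℝ} {s : Set α}
    (hφ : BoundedVariationOn φ s) {u : ℕ → α} (hu : Monotone u) (us : ∀ i, u i ∈ s) (N : ℕ) :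
    ∑ i ∈ Finset.range N, |φ (u (i + 1)) - φ (u i)| ≤ (eVariationOn φ s).toReal := by
  calc ∑ i ∈ Finset.range N, |φ (u (i + 1)) - φ (u i)|
      = (∑ i ∈ Finset.range N, edist (φ (u (i + 1))) (φ (u i))).toReal := by
        rw [ENNReal.toReal_sum fun _ _ => edist_ne_top _ _]
        simp only [edist_dist, Real.dist_eq, ENNReal.toReal_ofReal (abs_nonneg _)]
    _ ≤ (eVariationOn φ s).toReal :=
        ENNReal.toReal_mono hφ (eVariationOn.sum_le (f := φ) (n := N) hu us)

theorem fdiff_iterate_comp_div (g : ℝ → ℝ) (L : ℝ) (m : ℕ) :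
    fdiff^[m] (fun x => g (x / L)) = fun x => (-1) ^ m * Δ_[L⁻¹] ^[m] g (x / L) := by
  induction m with
  | zero => simp
  | succ m ih =>
    funext x
    rw [Function.iterate_succ_apply', ih, Function.iterate_succ_apply']
    simp only [fdiff, fwdDiff, add_div, one_div]
    ring

section RightDerivative

variable {f f' g : ℝ → ℝ} {δ : ℝ}

theorem fwdDiff_eq_integral_of_hasDerivWithinAt {x : ℝ} (hδ : 0 ≤ δ)
    (hf : ContinuousOn f (Icc x (x + δ)))
    (hf' : ∀ t ∈ Ioo x (x + δ), HasDerivWithinAt f (f' t) (Ioi t) t)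
    (hint : IntervalIntegrable f' volume x (x + δ)) :
    Δ_[δ] f x = ∫ t in 0..δ, f' (x + t) := by
  rw [intervalIntegral.integral_comp_add_left, add_zero,
    intervalIntegral.integral_eq_sub_of_hasDeriv_right_of_le (by linarith) hf hf' hint]
  rfl

theorem intervalIntegrable_fwdDiff_iter_comp_add (hδ : 0 ≤ δ)
    (hint : ∀ x, 0 ≤ x → IntervalIntegrable g volume x (x + δ)) (m : ℕ) {x : ℝ} (hx : 0 ≤ x) :
    IntervalIntegrable (fun t => Δ_[δ] ^[m] g (x + t)) volume 0 δ := by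
  induction m generalizing x with
  | zero => simpa using (hint x hx).comp_add_left x
  | succ m ih =>
    simp only [Function.iterate_succ_apply', fwdDiff, add_right_comm x _ δ]
    exact (ih (add_nonneg hx hδ)).sub (ih hx)

theorem fwdDiff_iter_succ_eq_integral (hδ : 0 ≤ δ) (hf : ContinuousOn f (Ici 0))
    (hf' : ∀ t, 0 ≤ t → HasDerivWithinAt f (f' t) (Ici t) t)
    (hint : ∀ x, 0 ≤ x → IntervalIntegrable f' volume x (x + δ)) (m : ℕ) {x : ℝ} (hx : 0 ≤ x) :
    Δ_[δ] ^[m + 1] f x = ∫ t in 0..δ, Δ_[δ] ^[m] f' (x + t) := by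
  induction m generalizing x with
  | zero =>
    refine fwdDiff_eq_integral_of_hasDerivWithinAt hδ (hf.mono fun y hy => hx.trans hy.1)
      (fun t ht => (hf' t (hx.trans ht.1.le)).mono Ioi_subset_Ici_self) (hint x hx)
  | succ m ih =>
    have hint' := fun {y} => intervalIntegrable_fwdDiff_iter_comp_add hδ hint m (x := y)
    calc Δ_[δ] ^[m + 2] f x = Δ_[δ] ^[m + 1] f (x + δ) - Δ_[δ] ^[m + 1] f x := by
          rw [Function.iterate_succ_apply']
          rfl
      _ = (∫ t in 0..δ, Δ_[δ] ^[m] f' (x + δ + t)) - ∫ t in 0..δ, Δ_[δ] ^[m] f' (x + t) := by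
          rw [ih (add_nonneg hx hδ), ih hx]
      _ = ∫ t in 0..δ, Δ_[δ] ^[m + 1] f' (x + t) := by
          rw [← intervalIntegral.integral_sub (hint' (add_nonneg hx hδ)) (hint' hx)]
          simp only [Function.iterate_succ_apply', fwdDiff, add_right_comm x _ δ]

theorem sum_abs_fwdDiff_iter_succ_le (hδ : 0 ≤ δ) (hf : ContinuousOn f (Ici 0))
    (hf' : ∀ t, 0 ≤ t → HasDerivWithinAt f (f' t) (Ici t) t)
    (hint : ∀ x, 0 ≤ x → IntervalIntegrable f' volume x (x + δ)) {m N : ℕ} {C : ℝ}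
    (hC : ∀ s, 0 ≤ s → ∑ k ∈ Finset.range N, |Δ_[δ] ^[m] f' (k * δ + s)| ≤ C)
    {s : ℝ} (hs : 0 ≤ s) :
    ∑ k ∈ Finset.range N, |Δ_[δ] ^[m + 1] f (k * δ + s)| ≤ δ * C := by
  have hpt : ∀ k : ℕ, 0 ≤ k * δ + s := fun k => by positivity
  have hint' : ∀ k ∈ Finset.range N,
      IntervalIntegrable (fun t => |Δ_[δ] ^[m] f' (k * δ + s + t)|) volume 0 δ :=
    fun k _ => (intervalIntegrable_fwdDiff_iter_comp_add hδ hint m (hpt k)).abs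
  calc ∑ k ∈ Finset.range N, |Δ_[δ] ^[m + 1] f (k * δ + s)|
      ≤ ∑ k ∈ Finset.range N, ∫ t in 0..δ, |Δ_[δ] ^[m] f' (k * δ + s + t)| := by
        gcongr with k
        rw [fwdDiff_iter_succ_eq_integral hδ hf hf' hint m (hpt k)]
        exact intervalIntegral.abs_integral_le_integral_abs hδ
    _ = ∫ t in 0..δ, ∑ k ∈ Finset.range N, |Δ_[δ] ^[m] f' (k * δ + s + t)| :=
        (intervalIntegral.integral_finsetSum hint').symm
    _ ≤ ∫ _ in 0..δ, C := by
        refine intervalIntegral.integral_mono_on hδ ?_ intervalIntegrable_const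
          fun t ht => by simpa only [add_assoc] using hC _ (add_nonneg hs ht.1)
        simpa only [Finset.sum_fn] using IntervalIntegrable.sum _ hint'
    _ = δ * C := by simp

end RightDerivative

theorem sum_abs_fwdDiff_iter_le_of_derivChain {F : ℕ → ℝ → ℝ} {δ : ℝ} (hδ : 0 ≤ δ)
    {n : ℕ} (hcont : ∀ j < n, ContinuousOn (F j) (Ici 0))
    (hderiv : ∀ j < n, ∀ t, 0 ≤ t → HasDerivWithinAt (F j) (F (j + 1) t) (Ici t) t)
    (hint : ∀ j < n, ∀ x, 0 ≤ x → IntervalIntegrable (F (j + 1)) volume x (x + δ))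
    (hbv : BoundedVariationOn (F n) (Ici 0)) (N : ℕ) {s : ℝ} (hs : 0 ≤ s) :
    ∑ k ∈ Finset.range N, |Δ_[δ] ^[n + 1] (F 0) (k * δ + s)| ≤
      δ ^ n * (eVariationOn (F n) (Ici 0)).toReal := by
  induction n generalizing F s with
  | zero =>
    have hu : Monotone fun i : ℕ => i * δ + s := fun i j hij => by dsimp only; gcongr
    have hmem (i : ℕ) : (i : ℝ) * δ + s ∈ Ici 0 := by rw [mem_Ici]; positivity
    convert hbv.sum_abs_sub_le hu hmem N using 3 with k
    · simp only [zero_add, Function.iterate_one, fwdDiff, Nat.cast_succ, add_one_mul,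
        add_right_comm _ δ s]
    · rw [pow_zero, one_mul]
  | succ n ih =>
    have ih' := fun s (hs : 0 ≤ s) => ih (F := fun j => F (j + 1))
      (fun j hj => hcont _ (by omega)) (fun j hj => hderiv _ (by omega))
      (fun j hj => hint _ (by omega)) hbv hs
    calc ∑ k ∈ Finset.range N, |Δ_[δ] ^[n + 2] (F 0) (k * δ + s)|
        ≤ δ * (δ ^ n * (eVariationOn (F (n + 1)) (Ici 0)).toReal) :=
          sum_abs_fwdDiff_iter_succ_le hδ (hcont 0 (by omega)) (hderiv 0 (by omega))
            (hint 0 (by omega)) ih' hs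
      _ = δ ^ (n + 1) * (eVariationOn (F (n + 1)) (Ici 0)).toReal := by ring

theorem sum_abs_fwdDiff_iter_le_of_rightDeriv {r : ℕ} (hr : 1 ≤ r)
    {D : ℕ → ℝ → ℝ} {Dp : ℝ → ℝ} {δ : ℝ} (hδ : 0 ≤ δ)
    (hcont : ∀ k < r, ContinuousOn (D k) (Ici 0))
    (hDeriv : ∀ k, k + 1 < r → ∀ t ∈ Ici (0:ℝ),
      HasDerivWithinAt (D k) (D (k + 1) t) (Ici 0) t)
    (hDp : ∀ t ∈ Ici (0:ℝ), HasDerivWithinAt (D (r - 1)) (Dp t) (Ici t) t)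
    (hBVp : BoundedVariationOn Dp (Ici 0)) (N : ℕ) :
    ∑ k ∈ Finset.range N, |Δ_[δ] ^[r + 1] (D 0) (k * δ)| ≤
      δ ^ r * (eVariationOn Dp (Ici 0)).toReal := by
  set E := Function.update D r Dp
  have hE : ∀ j < r, E j = D j := fun j hj => Function.update_of_ne hj.ne _ _
  have hEr : E r = Dp := Function.update_self _ _ _
  have hcontE : ∀ j < r, ContinuousOn (E j) (Ici 0) := fun j hj => hE j hj ▸ hcont j hj
  have hderivE : ∀ j < r, ∀ t, 0 ≤ t → HasDerivWithinAt (E j) (E (j + 1) t) (Ici t) t := by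
    intro j hj t ht
    rw [hE j hj]
    rcases Nat.lt_or_ge (j + 1) r with hj' | hj'
    · rw [hE _ hj']
      exact (hDeriv j hj' t ht).mono (Ici_subset_Ici.2 ht)
    · obtain rfl : r = j + 1 := by omega
      simpa [hEr] using hDp t ht
  have hintE : ∀ j < r, ∀ x, 0 ≤ x → IntervalIntegrable (E (j + 1)) volume x (x + δ) := by
    intro j hj x hx
    have hsub : uIcc x (x + δ) ⊆ Ici 0 := fun y hy => le_trans (le_min hx (by linarith)) hy.1
    rcases Nat.lt_or_ge (j + 1) r with hj' | hj'
    · exact ((hcontE _ hj').mono hsub).intervalIntegrable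
    · obtain rfl : r = j + 1 := by omega
      exact hEr ▸ (hBVp.mono hsub).intervalIntegrable
  simpa [hE 0 (by omega), hEr] using
    sum_abs_fwdDiff_iter_le_of_derivChain hδ hcontE hderivE hintE (hEr ▸ hBVp) N le_rfl

theorem statement9_general (r : ℕ) (hr : 1 ≤ r) (h : ℝ → ℝ)
    (D : ℕ → ℝ → ℝ) (Dp : ℝ → ℝ) (hD0 : D 0 = h)
    (hDeriv : ∀ k, k + 1 < r → ∀ t ∈ Set.Ici (0:ℝ),
      HasDerivWithinAt (D k) (D (k + 1) t) (Set.Ici 0) t)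
    (hAC : ∀ k, k < r → AbsContOn (D k) (Set.Ici 0))
    (hDp : ∀ t ∈ Set.Ici (0:ℝ), HasDerivWithinAt (D (r - 1)) (Dp t) (Set.Ici t) t)
    (hBVp : BoundedVariationOn Dp (Set.Ici 0)) :
    ∀ L : ℕ, 1 ≤ L →
      ∑ k ∈ Finset.range (2 * L + 1), |fdiff^[r + 1] (fun x => h (x / (L : ℝ))) (k : ℝ)| ≤
        ((L : ℝ) ^ r)⁻¹ * (eVariationOn Dp (Set.Ici 0)).toReal := by
  intro L _
  have key := sum_abs_fwdDiff_iter_le_of_rightDeriv hr (δ := (L : ℝ)⁻¹) (by positivity)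
    (fun k hk => (hAC k hk).continuousOn) hDeriv hDp hBVp (2 * L + 1)
  rw [fdiff_iterate_comp_div]
  simpa [abs_mul, div_eq_mul_inv, hD0, inv_pow] using key

/-- Let `r ≥ 1` and let `h` be a filter belonging to `W^rBV` on `[0,∞)`,
with derivatives `D 0 = h, …, D (r-1) = h^{(r−1)}` and one-sided `r`-th order derivatives
`Dp = h^{(r)}_+`, `Dm = h^{(r)}_-` of bounded variation. Then for every `L ≥ 1`,
`Σ_{k=0}^{2L} |(Δ^{r+1} g)(k)| ≤ L^{−r} ‖h^{(r)}_+‖_{BV}` where `g(x) = h(x/L)` and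
`‖·‖_{BV}` is the total variation on `[0,∞)`. -/
theorem statement9 (r : ℕ) (hr : 1 ≤ r) (h : ℝ → ℝ) (hfil : IsFilter h)
    (D : ℕ → ℝ → ℝ) (Dp Dm : ℝ → ℝ) (hD0 : D 0 = h)
    (hDeriv : ∀ k, k + 1 < r → ∀ t ∈ Set.Ici (0:ℝ),
      HasDerivWithinAt (D k) (D (k + 1) t) (Set.Ici 0) t)
    (hAC : ∀ k, k < r → AbsContOn (D k) (Set.Ici 0))
    (hDp : ∀ t ∈ Set.Ici (0:ℝ), HasDerivWithinAt (D (r - 1)) (Dp t) (Set.Ici t) t)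
    (hDm : ∀ t ∈ Set.Ici (0:ℝ), HasDerivWithinAt (D (r - 1)) (Dm t) (Set.Ici 0 ∩ Set.Iic t) t)
    (hBVp : BoundedVariationOn Dp (Set.Ici 0))
    (hBVm : BoundedVariationOn Dm (Set.Ici 0)) :
    ∀ L : ℕ, 1 ≤ L →
      ∑ k ∈ Finset.range (2 * L + 1), |fdiff^[r + 1] (fun x => h (x / (L : ℝ))) (k : ℝ)| ≤
        ((L : ℝ) ^ r)⁻¹ * (eVariationOn Dp (Set.Ici 0)).toReal :=
  statement9_general r hr h D Dp hD0 hDeriv hAC hDp hBVp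

end
end

section
/- Let a > 0 and define f : [0,3] → ℝ by f(t) = (max(1 − t/2, 0))^a. Then f belongs to W^{⌊a⌋}BV[0,3], but f does not belong to C^{⌊a+1⌋}[0,3] (i.e. f is not ⌊a+1⌋ times continuously differentiable on [0,3]). -/
open MeasureTheory Metric Set
open scoped ENNReal NNReal

noncomputable section

attribute [local instance] Classical.propDecidable

/-!
With `c_k = ∏_{i<k} (-(a-i)/2)` and `r = ⌊a⌋`, the derivatives of `f` of order `k < r` are
`c_k · max(1 - t/2, 0)^(a-k)`. Their exponents are at least `1`, so they are Lipschitz on `[0,3]`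
and hence absolutely continuous, while the one-sided derivatives of order `r` are multiples of
`(1 - t/2)^(a-r-1)` cut off at `t = 2`: monotone, hence of bounded variation.

Conversely, the `r`-th derivative is `c_r (1 - t/2)^(a-r)` left of `2` and `0` right of it, with
`c_r ≠ 0` and `0 ≤ a - r < 1`, so its difference quotients at `2` blow up from the left: it is not
differentiable at `2`, and `f` is not `C^(r+1)`.
-/

open Filter Topology

def cutoffPow (β t : ℝ) : ℝ := max (1 - t / 2) 0 ^ β

/-- The `k`-th derivative of `(1 - t/2)^a` is `derivCoeff a k * (1 - t/2)^(a - k)`. -/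
def derivCoeff (a : ℝ) (k : ℕ) : ℝ := ∏ i ∈ Finset.range k, (-(a - i) / 2)

lemma derivCoeff_succ (a : ℝ) (k : ℕ) : derivCoeff a (k + 1) = derivCoeff a k * (-(a - k) / 2) :=
  Finset.prod_range_succ _ _

lemma derivCoeff_ne_zero {a : ℝ} {k : ℕ} (hk : (k : ℝ) ≤ a) : derivCoeff a k ≠ 0 := by
  refine Finset.prod_ne_zero_iff.mpr fun i hi => ?_
  have : (i : ℝ) < k := by exact_mod_cast Finset.mem_range.mp hi
  exact div_ne_zero (neg_ne_zero.mpr (sub_ne_zero.mpr (by linarith))) two_ne_zero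

lemma cutoffPow_of_le {β t : ℝ} (ht : t ≤ 2) : cutoffPow β t = (1 - t / 2) ^ β := by
  rw [cutoffPow, max_eq_left (by linarith)]

lemma cutoffPow_of_ge {β t : ℝ} (hβ : 0 < β) (ht : 2 ≤ t) : cutoffPow β t = 0 := by
  rw [cutoffPow, max_eq_right (by linarith), Real.zero_rpow hβ.ne']

lemma cutoffPow_antitone {β : ℝ} (hβ : 0 ≤ β) : Antitone (cutoffPow β) := fun _ _ hst =>
  Real.rpow_le_rpow (le_max_right _ _) (max_le_max (by linarith) le_rfl) hβ

lemma hasDerivAt_one_sub_half_rpow {β t : ℝ} (h : 1 - t / 2 ≠ 0 ∨ 1 ≤ β) :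
    HasDerivAt (fun t => (1 - t / 2) ^ β) (-(β / 2) * (1 - t / 2) ^ (β - 1)) t := by
  have hlin : HasDerivAt (fun t : ℝ => 1 - t / 2) (-(1 / 2)) t := by
    simpa using ((hasDerivAt_id t).div_const 2).const_sub 1
  refine ((Real.hasDerivAt_rpow_const h).comp t hlin).congr_deriv ?_
  ring

lemma cutoffPow_eventuallyEq_of_lt {β t : ℝ} (ht : t < 2) :
    cutoffPow β =ᶠ[𝓝 t] fun t => (1 - t / 2) ^ β :=
  eventually_of_mem (Iio_mem_nhds ht) fun _ hs => cutoffPow_of_le (le_of_lt hs)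

lemma cutoffPow_eventuallyEq_zero {β t : ℝ} (hβ : 0 < β) (ht : 2 < t) :
    cutoffPow β =ᶠ[𝓝 t] 0 :=
  eventually_of_mem (Ioi_mem_nhds ht) fun _ hs => cutoffPow_of_ge hβ (le_of_lt hs)

lemma cutoffPow_hasDerivAt_of_lt {β t : ℝ} (ht : t < 2) :
    HasDerivAt (cutoffPow β) (-(β / 2) * (1 - t / 2) ^ (β - 1)) t :=
  (hasDerivAt_one_sub_half_rpow (Or.inl (by linarith))).congr_of_eventuallyEq
    (cutoffPow_eventuallyEq_of_lt ht)

lemma cutoffPow_hasDerivWithinAt_Iic {β t : ℝ} (hβ : 1 ≤ β) (ht : t ≤ 2) :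
    HasDerivWithinAt (cutoffPow β) (-(β / 2) * (1 - t / 2) ^ (β - 1)) (Iic 2) t :=
  (hasDerivAt_one_sub_half_rpow (Or.inr hβ)).hasDerivWithinAt.congr
    (fun _ hs => cutoffPow_of_le hs) (cutoffPow_of_le ht)

lemma cutoffPow_hasDerivWithinAt_Ici {β t : ℝ} (hβ : 0 < β) (ht : 2 ≤ t) :
    HasDerivWithinAt (cutoffPow β) 0 (Ici 2) t :=
  (hasDerivWithinAt_const _ _ _).congr (fun _ hs => cutoffPow_of_ge hβ hs) (cutoffPow_of_ge hβ ht)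

lemma cutoffPow_hasDerivAt {β : ℝ} (hβ : 1 < β) (t : ℝ) :
    HasDerivAt (cutoffPow β) (-(β / 2) * cutoffPow (β - 1) t) t := by
  rcases lt_trichotomy t 2 with ht | rfl | ht
  · rw [cutoffPow_of_le ht.le]
    exact cutoffPow_hasDerivAt_of_lt ht
  · have hleft := cutoffPow_hasDerivWithinAt_Iic hβ.le le_rfl
    rw [show (1 : ℝ) - 2 / 2 = 0 by norm_num, Real.zero_rpow (by linarith), mul_zero] at hleft
    rw [cutoffPow_of_ge (by linarith) le_rfl, mul_zero, ← hasDerivWithinAt_univ, ← Iic_union_Ici]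
    exact hleft.union (cutoffPow_hasDerivWithinAt_Ici (by linarith) le_rfl)
  · rw [cutoffPow_of_ge (by linarith) ht.le, mul_zero]
    exact (hasDerivAt_const t 0).congr_of_eventuallyEq
      (cutoffPow_eventuallyEq_zero (by linarith) ht)

lemma hasDerivAt_derivCoeff_mul_cutoffPow {a : ℝ} {k : ℕ} (hk : (k : ℝ) + 1 < a) (t : ℝ) :
    HasDerivAt (fun t => derivCoeff a k * cutoffPow (a - k) t)
      (derivCoeff a (k + 1) * cutoffPow (a - (k + 1 : ℕ)) t) t := by
  refine ((cutoffPow_hasDerivAt (by linarith) t).const_mul (derivCoeff a k)).congr_deriv ?_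
  rw [derivCoeff_succ, Nat.cast_succ, sub_add_eq_sub_sub]
  ring

-- For `β = 1` the two one-sided derivatives at `2` differ (`-1/2` from the left, `0` from the
-- right), because `0 ^ 0 = 1`; hence the indicators of `Iio 2` and `Iic 2`.
lemma cutoffPow_hasDerivWithinAt_Ici_self {β : ℝ} (hβ : 0 < β) (t : ℝ) :
    HasDerivWithinAt (cutoffPow β) (-(β / 2) * (Iio 2).indicator (fun t => (1 - t / 2) ^ (β - 1)) t)
      (Ici t) t := by
  by_cases ht : t < 2
  · rw [indicator_of_mem (mem_Iio.mpr ht)]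
    exact (cutoffPow_hasDerivAt_of_lt ht).hasDerivWithinAt
  · rw [not_lt] at ht
    rw [indicator_of_notMem (notMem_Iio.mpr ht), mul_zero]
    exact (cutoffPow_hasDerivWithinAt_Ici hβ ht).mono (Ici_subset_Ici.mpr ht)

lemma cutoffPow_hasDerivWithinAt_Iic_self {β : ℝ} (hβ : 1 ≤ β) (t : ℝ) :
    HasDerivWithinAt (cutoffPow β) (-(β / 2) * (Iic 2).indicator (fun t => (1 - t / 2) ^ (β - 1)) t)
      (Iic t) t := by
  by_cases ht : t ≤ 2
  · rw [indicator_of_mem (mem_Iic.mpr ht)]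
    exact (cutoffPow_hasDerivWithinAt_Iic hβ ht).mono (Iic_subset_Iic.mpr ht)
  · rw [indicator_of_notMem (notMem_Iic.mpr (not_le.mp ht)), mul_zero]
    exact ((hasDerivAt_const t 0).congr_of_eventuallyEq
      (cutoffPow_eventuallyEq_zero (by linarith) (not_le.mp ht))).hasDerivWithinAt

lemma antitone_indicator_one_sub_half_rpow {S : Set ℝ} (hS : IsLowerSet S) (hS2 : S ⊆ Iic 2)
    {e : ℝ} (he : 0 ≤ e) : Antitone (S.indicator fun t => (1 - t / 2) ^ e) := by
  intro s t hst
  by_cases ht : t ∈ S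
  · rw [indicator_of_mem ht, indicator_of_mem (hS hst ht)]
    exact Real.rpow_le_rpow (by linarith [mem_Iic.mp (hS2 ht)]) (by linarith) he
  · rw [indicator_of_notMem ht]
    exact indicator_nonneg (fun u hu => Real.rpow_nonneg (by linarith [mem_Iic.mp (hS2 hu)]) _) s

lemma Real.lipschitzOnWith_rpow_Icc_zero_one {β : ℝ} (hβ : 1 ≤ β) :
    LipschitzOnWith (Real.toNNReal β) (fun x : ℝ => x ^ β) (Icc 0 1) := by
  refine (convex_Icc 0 1).lipschitzOnWith_of_nnnorm_hasDerivWithin_le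
    (fun x _ => (Real.hasDerivAt_rpow_const (Or.inr hβ)).hasDerivWithinAt) fun x hx => ?_
  rw [← NNReal.coe_le_coe, coe_nnnorm, Real.norm_eq_abs, Real.coe_toNNReal _ (by linarith),
    abs_of_nonneg (by have := Real.rpow_nonneg hx.1 (β - 1); positivity)]
  exact mul_le_of_le_one_right (by linarith) (Real.rpow_le_one hx.1 hx.2 (by linarith))

lemma cutoffPow_lipschitzOnWith {β : ℝ} (hβ : 1 ≤ β) :
    LipschitzOnWith (Real.toNNReal β) (cutoffPow β) (Ici 0) := by
  have hbase : LipschitzWith 1 fun t : ℝ => max (1 - t / 2) 0 := by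
    refine LipschitzWith.of_dist_le_mul fun x y => ?_
    simp only [Real.dist_eq, NNReal.coe_one, one_mul]
    refine (abs_max_sub_max_le_abs _ _ _).trans ?_
    rw [show 1 - x / 2 - (1 - y / 2) = (x - y) * (-(1 / 2)) by ring, abs_mul]
    norm_num
    exact mul_le_of_le_one_right (abs_nonneg _) (by norm_num)
  have hmaps : MapsTo (fun t : ℝ => max (1 - t / 2) 0) (Ici 0) (Icc 0 1) :=
    fun t ht => ⟨le_max_right _ _, max_le (by linarith [mem_Ici.mp ht]) zero_le_one⟩
  have h := (Real.lipschitzOnWith_rpow_Icc_zero_one hβ).comp hbase.lipschitzOnWith hmaps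
  rw [mul_one] at h
  exact h

lemma LipschitzOnWith.absContOn {g : ℝ → ℝ} {K : ℝ≥0} {s : Set ℝ} (hg : LipschitzOnWith K g s) :
    AbsContOn g s := by
  intro ε hε
  refine ⟨ε / (K + 1), by positivity, fun n u v huv _ hsum => ?_⟩
  have hterm : ∀ i, |g (v i) - g (u i)| ≤ K * (v i - u i) := fun i => by
    obtain ⟨hu, hv, hle⟩ := huv i
    simpa [Real.dist_eq, abs_of_nonneg (sub_nonneg.mpr hle)] using hg.dist_le_mul _ hv _ hu
  calc ∑ i, |g (v i) - g (u i)| ≤ ∑ i, K * (v i - u i) := Finset.sum_le_sum fun i _ => hterm i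
    _ = K * ∑ i, (v i - u i) := (Finset.mul_sum _ _ _).symm
    _ ≤ K * (ε / (K + 1)) := mul_le_mul_of_nonneg_left hsum.le K.2
    _ < (K + 1) * (ε / (K + 1)) := by gcongr; linarith
    _ = ε := by field_simp

lemma BoundedVariationOn.const_mul {g : ℝ → ℝ} {s : Set ℝ} (c : ℝ) (hg : BoundedVariationOn g s) :
    BoundedVariationOn (fun t => c * g t) s :=
  (lipschitzWith_smul c).comp_boundedVariationOn hg

lemma AntitoneOn.boundedVariationOn_Icc {g : ℝ → ℝ} {a b : ℝ} (hab : a ≤ b)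
    (hg : AntitoneOn g (Icc a b)) : BoundedVariationOn g (Icc a b) := by
  have hneg : BoundedVariationOn (fun t => -g t) (Icc a b) := by
    have := hg.neg.eVariationOn_eq (left_mem_Icc.mpr hab) (right_mem_Icc.mpr hab)
    rw [inter_self] at this
    rw [BoundedVariationOn, this]
    exact ENNReal.ofReal_ne_top
  simpa using hneg.const_mul (-1)

lemma iteratedDeriv_cutoffPow_of_lt (a : ℝ) (k : ℕ) {t : ℝ} (ht : t < 2) :
    iteratedDeriv k (cutoffPow a) t = derivCoeff a k * (1 - t / 2) ^ (a - k) := by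
  induction k generalizing t with
  | zero => simp [cutoffPow_of_le ht.le, derivCoeff]
  | succ k ih =>
    have hev : iteratedDeriv k (cutoffPow a) =ᶠ[𝓝 t]
        fun s => derivCoeff a k * (1 - s / 2) ^ (a - k) :=
      eventually_of_mem (Iio_mem_nhds ht) fun s hs => ih hs
    rw [iteratedDeriv_succ, hev.deriv_eq,
      ((hasDerivAt_one_sub_half_rpow (Or.inl (by linarith))).const_mul _).deriv,
      derivCoeff_succ, Nat.cast_succ, sub_add_eq_sub_sub]
    ring

lemma iteratedDeriv_cutoffPow_of_gt {a : ℝ} (ha : 0 < a) (k : ℕ) {t : ℝ} (ht : 2 < t) :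
    iteratedDeriv k (cutoffPow a) t = 0 :=
  ((cutoffPow_eventuallyEq_zero ha ht).iteratedDeriv k).eq_of_nhds.trans iteratedDeriv_const_zero

lemma ContDiffOn.differentiableAt_iteratedDeriv {𝕜 F : Type*} [NontriviallyNormedField 𝕜]
    [NormedAddCommGroup F] [NormedSpace 𝕜 F] {f : 𝕜 → F} {s : Set 𝕜} {x : 𝕜} {n : WithTop ℕ∞}
    {m : ℕ} (hf : ContDiffOn 𝕜 n f s) (hs : s ∈ 𝓝 x) (hm : m < n) :
    DifferentiableAt 𝕜 (iteratedDeriv m f) x := by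
  have hdiff := (hf.mono interior_subset).differentiableOn_iteratedDerivWithin hm
    isOpen_interior.uniqueDiffOn
  exact (hdiff.congr (iteratedDerivWithin_of_isOpen isOpen_interior).symm).differentiableAt
    (isOpen_interior.mem_nhds (mem_interior_iff_mem_nhds.mpr hs))

lemma not_differentiableAt_of_eventuallyEq_rpow_left {g : ℝ → ℝ} {x₀ c e : ℝ} (hc : c ≠ 0)
    (he : e < 1) (hleft : ∀ᶠ t in 𝓝[<] x₀, g t = c * (x₀ - t) ^ e)
    (hright : ∀ᶠ t in 𝓝[>] x₀, g t = 0) : ¬ DifferentiableAt ℝ g x₀ := by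
  intro hg
  have hg0 : g x₀ = 0 := tendsto_nhds_unique (hg.continuousAt.tendsto.mono_left nhdsWithin_le_nhds)
    (tendsto_const_nhds.congr' (hright.mono fun _ ht => ht.symm))
  have hslope : Tendsto (slope g x₀) (𝓝[<] x₀) (𝓝 (deriv g x₀)) :=
    hg.hasDerivAt.tendsto_slope.mono_left (nhdsWithin_mono _ fun t ht => ne_of_lt ht)
  have hgap : Tendsto (fun t => x₀ - t) (𝓝[<] x₀) (𝓝[>] 0) := by
    refine tendsto_nhdsWithin_iff.mpr ⟨?_, eventually_nhdsWithin_of_forall fun t ht => ?_⟩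
    · have := ((continuous_sub_left x₀).tendsto x₀).mono_left (nhdsWithin_le_nhds (s := Iio x₀))
      rwa [sub_self] at this
    · exact sub_pos.mpr (mem_Iio.mp ht)
  have hblow : Tendsto (fun t => |slope g x₀ t|) (𝓝[<] x₀) atTop := by
    refine (((tendsto_rpow_neg_nhdsGT_zero (by linarith : e - 1 < 0)).comp hgap).const_mul_atTop
      (abs_pos.mpr hc)).congr' ?_
    filter_upwards [hleft, self_mem_nhdsWithin] with t hgt ht
    have hpos : 0 < x₀ - t := sub_pos.mpr ht
    rw [slope_def_field, hg0, sub_zero, hgt, Function.comp_apply, Real.rpow_sub_one hpos.ne',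
      abs_div, abs_mul, abs_of_pos (Real.rpow_pos_of_pos hpos e), abs_sub_comm, abs_of_pos hpos,
      mul_div_assoc]
  exact not_tendsto_atTop_of_tendsto_nhds hslope.abs hblow

theorem memWrBVOn_cutoffPow {a : ℝ} (ha : 0 < a) : MemWrBVOn ⌊a⌋₊ (cutoffPow a) (Icc 0 3) := by
  have hfloor : (⌊a⌋₊ : ℝ) ≤ a := Nat.floor_le ha.le
  cases hr : ⌊a⌋₊ with
  | zero =>
    rw [MemWrBVOn, if_pos rfl]
    exact AntitoneOn.boundedVariationOn_Icc (by norm_num) ((cutoffPow_antitone ha.le).antitoneOn _)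
  | succ m =>
    rw [hr, Nat.cast_succ] at hfloor
    rw [MemWrBVOn, if_neg m.succ_ne_zero, Nat.add_sub_cancel]
    refine ⟨fun k t => derivCoeff a k * cutoffPow (a - k) t,
      fun t => derivCoeff a m * (-((a - m) / 2) *
        (Iio 2).indicator (fun t => (1 - t / 2) ^ (a - m - 1)) t),
      fun t => derivCoeff a m * (-((a - m) / 2) *
        (Iic 2).indicator (fun t => (1 - t / 2) ^ (a - m - 1)) t),
      ?_, ?_, ?_, ?_, ?_, ?_, ?_⟩
    · funext t
      simp [derivCoeff, cutoffPow]
    · intro k hk t _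
      have hk' : (k : ℝ) < m := by exact_mod_cast Nat.succ_lt_succ_iff.mp hk
      exact (hasDerivAt_derivCoeff_mul_cutoffPow (by linarith) t).hasDerivWithinAt
    · intro k hk
      have hk' : (k : ℝ) ≤ m := by exact_mod_cast Nat.lt_succ_iff.mp hk
      exact (((lipschitzWith_smul (derivCoeff a k)).comp_lipschitzOnWith
        (cutoffPow_lipschitzOnWith (by linarith))).mono Icc_subset_Ici_self).absContOn
    · intro t _
      exact ((cutoffPow_hasDerivWithinAt_Ici_self (by linarith) t).const_mul _).mono
        inter_subset_right
    · intro t _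
      exact ((cutoffPow_hasDerivWithinAt_Iic_self (by linarith) t).const_mul _).mono
        inter_subset_right
    · exact ((AntitoneOn.boundedVariationOn_Icc (by norm_num)
        ((antitone_indicator_one_sub_half_rpow (isLowerSet_Iio 2) Iio_subset_Iic_self
          (by linarith)).antitoneOn _)).const_mul _).const_mul _
    · exact ((AntitoneOn.boundedVariationOn_Icc (by norm_num)
        ((antitone_indicator_one_sub_half_rpow (isLowerSet_Iic 2) subset_rfl
          (by linarith)).antitoneOn _)).const_mul _).const_mul _

theorem not_contDiffOn_cutoffPow {a : ℝ} (ha : 0 < a) :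
    ¬ ContDiffOn ℝ (⌊a⌋₊ + 1 : ℕ) (cutoffPow a) (Icc 0 3) := by
  intro hf
  have hdiff := hf.differentiableAt_iteratedDeriv (m := ⌊a⌋₊)
    (Icc_mem_nhds (by norm_num : (0 : ℝ) < 2) (by norm_num)) (by exact_mod_cast ⌊a⌋₊.lt_succ_self)
  refine not_differentiableAt_of_eventuallyEq_rpow_left
    (c := derivCoeff a ⌊a⌋₊ / 2 ^ (a - ⌊a⌋₊)) (e := a - ⌊a⌋₊) ?_ ?_ ?_ ?_ hdiff
  · exact div_ne_zero (derivCoeff_ne_zero (Nat.floor_le ha.le)) (by positivity)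
  · linarith [Nat.lt_floor_add_one a]
  · filter_upwards [self_mem_nhdsWithin] with t ht
    rw [iteratedDeriv_cutoffPow_of_lt a _ ht, show 1 - t / 2 = (2 - t) / 2 by ring,
      Real.div_rpow (by linarith [mem_Iio.mp ht]) zero_le_two]
    ring
  · filter_upwards [self_mem_nhdsWithin] with t ht using iteratedDeriv_cutoffPow_of_gt ha _ ht

/-- For `a > 0`, the function `f(t) = (max(1 − t/2, 0))^a` belongs to
`W^{⌊a⌋}BV[0,3]` but is not `⌊a+1⌋ = ⌊a⌋+1` times continuously differentiable on `[0,3]`. -/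
theorem statement11 (a : ℝ) (ha : 0 < a) :
    MemWrBVOn ⌊a⌋₊ (fun t : ℝ => max (1 - t / 2) 0 ^ a) (Set.Icc 0 3) ∧
    ¬ ContDiffOn ℝ (⌊a⌋₊ + 1 : ℕ) (fun t : ℝ => max (1 - t / 2) 0 ^ a)
        (Set.Icc (0:ℝ) 3) :=
  ⟨memWrBVOn_cutoffPow ha, not_contDiffOn_cutoffPow ha⟩

end
end
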